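/- Let λ be an ordinal, μ a cardinal, τ a finite relational vocabulary, and ⊛ a quantifier-free sum-like binary operation on τ-structures. If L is one of the logics tΣ_{∞,λ}[μ] or tΠ_{∞,λ}[μ] over τ (the unions of tΣ_{κ,λ}[μ], resp. tΠ_{κ,λ}[μ], over all infinite cardinals κ), then for every L sentence φ there is an L reduction sequence that is a Feferman–Vaught decomposition of φ over ⊛. -/

import Mathlib

/-!
Write `(A, ā) ⇛ (B, b̄)` when every tΣ_{∞,λ} formula of rank at most `μ` (less the quantifiers
already spent) that holds of `ā` in `A` also holds of `b̄` in `B`. The heart of the proof is that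
`⇛` composes through a quantifier-free sum-like operation: if `(A₁, ā₁) ⇛ (B₁, b̄₁)` and
`(A₂, ā₂) ⇛ (B₂, b̄₂)`, then tΣ_{∞,λ} formulas transfer from `Ξ(A₁ ⊍ A₂)` to `Ξ(B₁ ⊍ B₂)` at the
combined tuples. Such a formula is `∃ x̄ θ` with `θ` quantifier-free or a conjunction of tΠ
formulas of lower level. A witness block for `x̄` splits into a block in `A₁` and one in `A₂`; by
`⇛`, each has an answer in `Bⱼ` with the same atomic type from which every tΣ formula of lower
level transfers back. Quantifier-free formulas of `Ξ(A₁ ⊍ A₂)` only see atomic types, and each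
tΠ conjunct transfers forward by induction on the level, applied to its negation.

Hence the truth of `φ` in `A₁ ⊛ A₂` only depends on which tΣ_{∞,λ} sentences of rank at most `μ`
hold in `A₁` and in `A₂`. Up to equivalence these sentences form a set, by induction on the level:
each says `∃ x̄` (the atomic type of `x̄` lies in a given set, and given lower-level formulas fail).
A family of representatives serves as `Δ₁ = Δ₂`, and `β` is the disjunction of the truth patterns
of the pairs `(X₁, X₂)` with `X₁ ⊛ X₂ ⊨ φ`. The tΠ case follows by negation.
-/

namespace FV

open Cardinal

/-- A (finite) relational vocabulary: a type of relation symbols with arities. -/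
structure Vocab : Type 1 where
  Rel : Type
  arity : Rel → ℕ

/-- A structure over a relational vocabulary. -/
structure Struc (τ : Vocab) : Type 1 where
  carrier : Type
  rel : ∀ R : τ.Rel, (Fin (τ.arity R) → carrier) → Prop

/-- Infinitary formulae in negation normal form over a relational vocabulary,
with free variables among `Fin n`. -/
inductive Formula (τ : Vocab) : ℕ → Type 1 where
  | tru {n : ℕ} : Formula τ n
  | fls {n : ℕ} : Formula τ n
  | rel {n : ℕ} (R : τ.Rel) (ts : Fin (τ.arity R) → Fin n) : Formula τ n
  | nrel {n : ℕ} (R : τ.Rel) (ts : Fin (τ.arity R) → Fin n) : Formula τ n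
  | eq {n : ℕ} (i j : Fin n) : Formula τ n
  | neq {n : ℕ} (i j : Fin n) : Formula τ n
  | iAnd {n : ℕ} (I : Type) (f : I → Formula τ n) : Formula τ n
  | iOr {n : ℕ} (I : Type) (f : I → Formula τ n) : Formula τ n
  | ex {n : ℕ} (φ : Formula τ (n+1)) : Formula τ n
  | all {n : ℕ} (φ : Formula τ (n+1)) : Formula τ n

/-- Binary conjunction (a conjunction of arity 2). -/
def Formula.and {τ : Vocab} {n : ℕ} (φ ψ : Formula τ n) : Formula τ n :=
  Formula.iAnd Bool (fun b => if b then φ else ψ)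

/-- Binary disjunction (a disjunction of arity 2). -/
def Formula.or {τ : Vocab} {n : ℕ} (φ ψ : Formula τ n) : Formula τ n :=
  Formula.iOr Bool (fun b => if b then φ else ψ)

/-- Quantifier-free formulae (in NNF, with finite conjunctions/disjunctions). -/
inductive IsQF {τ : Vocab} : ∀ {n : ℕ}, Formula τ n → Prop where
  | tru {n : ℕ} : IsQF (Formula.tru (τ := τ) (n := n))
  | fls {n : ℕ} : IsQF (Formula.fls (τ := τ) (n := n))
  | rel {n : ℕ} (R : τ.Rel) (ts : Fin (τ.arity R) → Fin n) : IsQF (Formula.rel R ts)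
  | nrel {n : ℕ} (R : τ.Rel) (ts : Fin (τ.arity R) → Fin n) : IsQF (Formula.nrel R ts)
  | eq {n : ℕ} (i j : Fin n) : IsQF (Formula.eq (τ := τ) i j)
  | neq {n : ℕ} (i j : Fin n) : IsQF (Formula.neq (τ := τ) i j)
  | iAnd {n : ℕ} (I : Type) (hI : Finite I) (f : I → Formula τ n)
      (h : ∀ i, IsQF (f i)) : IsQF (Formula.iAnd I f)
  | iOr {n : ℕ} (I : Type) (hI : Finite I) (f : I → Formula τ n)
      (h : ∀ i, IsQF (f i)) : IsQF (Formula.iOr I f)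

/-- Satisfaction of a formula in a structure under an assignment. -/
def Sat {τ : Vocab} (A : Struc τ) : ∀ {n : ℕ}, Formula τ n → (Fin n → A.carrier) → Prop
  | _, .tru, _ => True
  | _, .fls, _ => False
  | _, .rel R ts, v => A.rel R (fun i => v (ts i))
  | _, .nrel R ts, v => ¬ A.rel R (fun i => v (ts i))
  | _, .eq i j, v => v i = v j
  | _, .neq i j, v => v i ≠ v j
  | _, .iAnd I f, v => ∀ i : I, Sat A (f i) v
  | _, .iOr I f, v => ∃ i : I, Sat A (f i) v
  | _, .ex φ, v => ∃ a, Sat A φ (Fin.snoc v a)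
  | _, .all φ, v => ∀ a, Sat A φ (Fin.snoc v a)

/-- The empty assignment. -/
def emptyA {α : Type} : Fin 0 → α := fun i => i.elim0

/-- The (quantifier) rank of a formula: the supremum of the number of quantifiers
on any root-to-leaf path of its parse tree. -/
noncomputable def rank {τ : Vocab} : ∀ {n : ℕ}, Formula τ n → Cardinal
  | _, .iAnd I f => ⨆ i : I, rank (f i)
  | _, .iOr I f => ⨆ i : I, rank (f i)
  | _, .ex φ => rank φ + 1
  | _, .all φ => rank φ + 1
  | _, _ => 0

/-- The size of a formula (number of nodes of its parse tree), as a cardinal. -/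
noncomputable def sizeC {τ : Vocab} : ∀ {n : ℕ}, Formula τ n → Cardinal
  | _, .iAnd I f => 1 + Cardinal.sum (fun i : I => sizeC (f i))
  | _, .iOr I f => 1 + Cardinal.sum (fun i : I => sizeC (f i))
  | _, .ex φ => 1 + sizeC φ
  | _, .all φ => 1 + sizeC φ
  | _, _ => 1

mutual
/-- The class tΣ_{κ,λ} of formulae. -/
inductive TSigma (τ : Vocab) (κ : Cardinal) : Ordinal → ∀ {n : ℕ}, Formula τ n → Prop where
  | qf {n : ℕ} {φ : Formula τ n} : IsQF φ → TSigma τ κ 0 φ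
  | conj {n : ℕ} {lam : Ordinal} (I : Type) (f : I → Formula τ n)
      (hI : Cardinal.mk I < κ) (lam' : I → Ordinal) (hlt : ∀ i, lam' i < lam)
      (h : ∀ i, TPi τ κ (lam' i) (f i)) : TSigma τ κ lam (Formula.iAnd I f)
  | ex {n : ℕ} {lam : Ordinal} {φ : Formula τ (n+1)} :
      TSigma τ κ lam φ → TSigma τ κ lam (Formula.ex φ)

/-- The class tΠ_{κ,λ} of formulae. -/
inductive TPi (τ : Vocab) (κ : Cardinal) : Ordinal → ∀ {n : ℕ}, Formula τ n → Prop where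
  | qf {n : ℕ} {φ : Formula τ n} : IsQF φ → TPi τ κ 0 φ
  | disj {n : ℕ} {lam : Ordinal} (I : Type) (f : I → Formula τ n)
      (hI : Cardinal.mk I < κ) (lam' : I → Ordinal) (hlt : ∀ i, lam' i < lam)
      (h : ∀ i, TSigma τ κ (lam' i) (f i)) : TPi τ κ lam (Formula.iOr I f)
  | all {n : ℕ} {lam : Ordinal} {φ : Formula τ (n+1)} :
      TPi τ κ lam φ → TPi τ κ lam (Formula.all φ)
end

/-- tΣ_{∞,λ}: union of tΣ_{κ,λ} over all infinite cardinals κ. -/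
def TSigmaInf (τ : Vocab) (lam : Ordinal) {n : ℕ} (φ : Formula τ n) : Prop :=
  ∃ κ : Cardinal, ℵ₀ ≤ κ ∧ TSigma τ κ lam φ

/-- tΠ_{∞,λ}: union of tΠ_{κ,λ} over all infinite cardinals κ. -/
def TPiInf (τ : Vocab) (lam : Ordinal) {n : ℕ} (φ : Formula τ n) : Prop :=
  ∃ κ : Cardinal, ℵ₀ ≤ κ ∧ TPi τ κ lam φ

/-- The λ-fold exponential `tower` function (taking suprema at limits). -/
noncomputable def towerC (κ : Cardinal) (l : Ordinal) : Cardinal :=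
  Ordinal.limitRecOn l κ (fun _ ih => (2 : Cardinal) ^ ih)
    (fun o _ ih => ⨆ i : {o' : Ordinal // o' < o}, ih i.1 i.2)

/-- The n-fold exponential `tower` function on naturals. -/
def towerN : ℕ → Cardinal → Cardinal
  | 0, k => k
  | n+1, k => (2 : Cardinal) ^ towerN n k

open Classical in
/-- ρ(κ,λ) = tower(λ,κ) if κ > ω, else ω. -/
noncomputable def rho (κ : Cardinal) (lam : Ordinal) : Cardinal :=
  if ℵ₀ < κ then towerC κ lam else ℵ₀

/-- ∞-propositional formulae over a set `V` of propositional variables. -/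
inductive PropForm (V : Type) : Type 1 where
  | var (v : V) : PropForm V
  | not (p : PropForm V) : PropForm V
  | iAnd (I : Type) (f : I → PropForm V) : PropForm V
  | iOr (I : Type) (f : I → PropForm V) : PropForm V

/-- Binary conjunction of propositional formulae. -/
def PropForm.and {V : Type} (p q : PropForm V) : PropForm V :=
  PropForm.iAnd Bool (fun b => if b then p else q)

/-- Binary disjunction of propositional formulae. -/
def PropForm.or {V : Type} (p q : PropForm V) : PropForm V :=
  PropForm.iOr Bool (fun b => if b then p else q)

/-- Evaluation of an ∞-propositional formula under an assignment. -/
def PropForm.eval {V : Type} (ζ : V → Bool) : PropForm V → Prop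
  | .var v => ζ v = true
  | .not p => ¬ PropForm.eval ζ p
  | .iAnd _ f => ∀ i, PropForm.eval ζ (f i)
  | .iOr _ f => ∃ i, PropForm.eval ζ (f i)

/-- Negation-free ∞-propositional formulae. -/
inductive PropForm.NegFree {V : Type} : PropForm V → Prop where
  | var (v : V) : PropForm.NegFree (.var v)
  | iAnd (I : Type) (f : I → PropForm V) (h : ∀ i, PropForm.NegFree (f i)) :
      PropForm.NegFree (.iAnd I f)
  | iOr (I : Type) (f : I → PropForm V) (h : ∀ i, PropForm.NegFree (f i)) :
      PropForm.NegFree (.iOr I f)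

/-- Finitary (ordinary) propositional formulae. -/
inductive PropForm.Finitary {V : Type} : PropForm V → Prop where
  | var (v : V) : PropForm.Finitary (.var v)
  | not (p : PropForm V) (h : PropForm.Finitary p) : PropForm.Finitary (.not p)
  | iAnd (I : Type) (hI : Finite I) (f : I → PropForm V)
      (h : ∀ i, PropForm.Finitary (f i)) : PropForm.Finitary (.iAnd I f)
  | iOr (I : Type) (hI : Finite I) (f : I → PropForm V)
      (h : ∀ i, PropForm.Finitary (f i)) : PropForm.Finitary (.iOr I f)

/-- Size of an ∞-propositional formula. -/
noncomputable def PropForm.size {V : Type} : PropForm V → Cardinal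
  | .var _ => 1
  | .not p => 1 + PropForm.size p
  | .iAnd I f => 1 + Cardinal.sum (fun i : I => PropForm.size (f i))
  | .iOr I f => 1 + Cardinal.sum (fun i : I => PropForm.size (f i))

/-- A reduction sequence `D(x̄₁, x̄₂) = (Δ₁(x̄₁), Δ₂(x̄₂), β)` over τ. -/
structure RedSeq (τ : Vocab) (r₁ r₂ : ℕ) : Type 1 where
  I : Type
  Δ₁ : I → Formula τ r₁
  Δ₂ : I → Formula τ r₂
  β : PropForm (I × Fin 2)

/-- `(A₁, A₂, ā₁, ā₂)` is a model of the reduction sequence `D`. -/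
def RedSeq.Models {τ : Vocab} {r₁ r₂ : ℕ} (D : RedSeq τ r₁ r₂) (A₁ A₂ : Struc τ)
    (a₁ : Fin r₁ → A₁.carrier) (a₂ : Fin r₂ → A₂.carrier) : Prop :=
  ∃ ζ : D.I × Fin 2 → Bool, D.β.eval ζ ∧
    (∀ i : D.I, (ζ (i, 0) = true ↔ Sat A₁ (D.Δ₁ i) a₁)) ∧
    (∀ i : D.I, (ζ (i, 1) = true ↔ Sat A₂ (D.Δ₂ i) a₂))

/-- Size of a reduction sequence. -/
noncomputable def RedSeq.size {τ : Vocab} {r₁ r₂ : ℕ} (D : RedSeq τ r₁ r₂) : Cardinal :=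
  Cardinal.sum (fun i : D.I => sizeC (D.Δ₁ i)) +
    Cardinal.sum (fun i : D.I => sizeC (D.Δ₂ i)) + D.β.size

/-- The vocabulary τ̱ = τ ∪ {P} for a new unary predicate P (represented by `none`). -/
def annotV (τ : Vocab) : Vocab where
  Rel := Option τ.Rel
  arity := fun R => match R with
    | none => 1
    | some S => τ.arity S

/-- The annotated disjoint union of two τ-structures: their disjoint union,
expanded by interpreting the new unary predicate P as the universe of the first. -/
def adu {τ : Vocab} (A₁ A₂ : Struc τ) : Struc (annotV τ) where
  carrier := A₁.carrier ⊕ A₂.carrier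
  rel := fun R => match R with
    | none => fun v => (v ⟨0, Nat.one_pos⟩).isLeft = true
    | some S => fun v =>
        (∃ w : Fin (τ.arity S) → A₁.carrier, A₁.rel S w ∧ v = fun i => Sum.inl (w i)) ∨
        (∃ w : Fin (τ.arity S) → A₂.carrier, A₂.rel S w ∧ v = fun i => Sum.inr (w i))

/-- `D` is a Feferman–Vaught decomposition of `φ(x̄₁,x̄₂)` over annotated disjoint union. -/
def FVDecompADU {τ : Vocab} {r₁ r₂ : ℕ} (φ : Formula (annotV τ) (r₁ + r₂))
    (D : RedSeq τ r₁ r₂) : Prop :=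
  ∀ (A₁ A₂ : Struc τ) (a₁ : Fin r₁ → A₁.carrier) (a₂ : Fin r₂ → A₂.carrier),
    Sat (adu A₁ A₂) φ (Fin.append (fun i => Sum.inl (a₁ i)) (fun i => Sum.inr (a₂ i)))
      ↔ D.Models A₁ A₂ a₁ a₂

/-- `D` is a Feferman–Vaught decomposition of the sentence `φ` over the binary operation `op`. -/
def FVDecompOp {τ : Vocab} (op : Struc τ → Struc τ → Struc τ) (φ : Formula τ 0)
    (D : RedSeq τ 0 0) : Prop :=
  ∀ A₁ A₂ : Struc τ, Sat (op A₁ A₂) φ emptyA ↔ D.Models A₁ A₂ emptyA emptyA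

/-- A quantifier-free scalar (σ,τ)-interpretation. -/
structure QFInterp (σ τ : Vocab) : Type 1 where
  xiU : Formula σ 1
  xiR : ∀ R : τ.Rel, Formula σ (τ.arity R)
  hU : IsQF xiU
  hR : ∀ R : τ.Rel, IsQF (xiR R)

/-- The τ-structure interpreted in a σ-structure by a quantifier-free interpretation. -/
def QFInterp.app {σ τ : Vocab} (Ξ : QFInterp σ τ) (A : Struc σ) : Struc τ where
  carrier := { a : A.carrier // Sat A Ξ.xiU (fun _ => a) }
  rel := fun R v => Sat A (Ξ.xiR R) (fun i => (v i).1)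

/-- The quantifier-free sum-like binary operation defined by a (τ̱,τ)-interpretation. -/
def sumLike {τ : Vocab} (Ξ : QFInterp (annotV τ) τ) (A₁ A₂ : Struc τ) : Struc τ :=
  Ξ.app (adu A₁ A₂)


/-- Relabelling of free variables. -/
def relabel {τ : Vocab} : ∀ {m n : ℕ}, (Fin m → Fin n) → Formula τ m → Formula τ n
  | _, _, _, .tru => .tru
  | _, _, _, .fls => .fls
  | _, _, g, .rel R ts => .rel R (fun i => g (ts i))
  | _, _, g, .nrel R ts => .nrel R (fun i => g (ts i))
  | _, _, g, .eq i j => .eq (g i) (g j)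
  | _, _, g, .neq i j => .neq (g i) (g j)
  | _, _, g, .iAnd I f => .iAnd I (fun i => relabel g (f i))
  | _, _, g, .iOr I f => .iOr I (fun i => relabel g (f i))
  | _, _, g, .ex φ => .ex (relabel (Fin.snoc (fun i => Fin.castSucc (g i)) (Fin.last _)) φ)
  | _, _, g, .all φ => .all (relabel (Fin.snoc (fun i => Fin.castSucc (g i)) (Fin.last _)) φ)

/-- Negation, in negation normal form. -/
def nnfNeg {τ : Vocab} : ∀ {n : ℕ}, Formula τ n → Formula τ n
  | _, .tru => .fls
  | _, .fls => .tru
  | _, .rel R ts => .nrel R ts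
  | _, .nrel R ts => .rel R ts
  | _, .eq i j => .neq i j
  | _, .neq i j => .eq i j
  | _, .iAnd I f => .iOr I (fun i => nnfNeg (f i))
  | _, .iOr I f => .iAnd I (fun i => nnfNeg (f i))
  | _, .ex φ => .all (nnfNeg φ)
  | _, .all φ => .ex (nnfNeg φ)

/-- Finite conjunction of a tuple of formulae. -/
def finAnd {τ : Vocab} {n : ℕ} : ∀ {r : ℕ}, (Fin r → Formula τ n) → Formula τ n
  | 0, _ => .tru
  | r+1, f => (finAnd (fun i => f (Fin.castSucc i))).and (f (Fin.last r))

/-- A block of `k` existential quantifiers. -/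
def exBlock {τ : Vocab} : ∀ (k : ℕ) {r : ℕ}, Formula τ (r + k) → Formula τ r
  | 0, _, φ => φ
  | k+1, _, φ => exBlock k (Formula.ex φ)

/-- A block of `k` universal quantifiers. -/
def allBlock {τ : Vocab} : ∀ (k : ℕ) {r : ℕ}, Formula τ (r + k) → Formula τ r
  | 0, _, φ => φ
  | k+1, _, φ => allBlock k (Formula.all φ)

mutual
/-- The class tΣ_{(n,k)}: tΣ_n formulae all of whose quantifier blocks have length exactly k. -/
inductive SigNK (τ : Vocab) (k : ℕ) : ℕ → ∀ {r : ℕ}, Formula τ r → Prop where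
  | qf {r : ℕ} {φ : Formula τ r} : IsQF φ → SigNK τ k 0 φ
  | blk {r n : ℕ} (hn : 0 < n) (I : Type) (hI : Finite I) (f : I → Formula τ (r + k))
      (n' : I → ℕ) (hlt : ∀ i, n' i < n) (h : ∀ i, PiNK τ k (n' i) (f i)) :
      SigNK τ k n (exBlock k (Formula.iAnd I f))
/-- The class tΠ_{(n,k)}: tΠ_n formulae all of whose quantifier blocks have length exactly k. -/
inductive PiNK (τ : Vocab) (k : ℕ) : ℕ → ∀ {r : ℕ}, Formula τ r → Prop where
  | qf {r : ℕ} {φ : Formula τ r} : IsQF φ → PiNK τ k 0 φ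
  | blk {r n : ℕ} (hn : 0 < n) (I : Type) (hI : Finite I) (f : I → Formula τ (r + k))
      (n' : I → ℕ) (hlt : ∀ i, n' i < n) (h : ∀ i, SigNK τ k (n' i) (f i)) :
      PiNK τ k n (allBlock k (Formula.iOr I f))
end

/-- Partial isomorphism condition on a pair of tuples. -/
def PIso {τ : Vocab} (A₁ A₂ : Struc τ) (r : ℕ)
    (a₁ : Fin r → A₁.carrier) (a₂ : Fin r → A₂.carrier) : Prop :=
  (∀ i j : Fin r, a₁ i = a₁ j ↔ a₂ i = a₂ j) ∧
  (∀ (R : τ.Rel) (ts : Fin (τ.arity R) → Fin r),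
      A₁.rel R (fun l => a₁ (ts l)) ↔ A₂.rel R (fun l => a₂ (ts l)))

/-- The Duplicator has a winning strategy in the (n,k)-prefix game on the ordered pair
((A₁,ā₁),(A₂,ā₂)): in odd rounds the Spoiler picks a k-tuple in A₁ (and the Duplicator
answers in A₂), in even rounds the roles of the structures are swapped; the Duplicator wins
a play if the chosen tuples collectively form a partial isomorphism. -/
def DWinPrefix {τ : Vocab} (k : ℕ) : ℕ → (A₁ A₂ : Struc τ) → (r : ℕ) →
    (Fin r → A₁.carrier) → (Fin r → A₂.carrier) → Prop
  | 0, A₁, A₂, r, a₁, a₂ => PIso A₁ A₂ r a₁ a₂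
  | n+1, A₁, A₂, r, a₁, a₂ =>
      ∀ b₁ : Fin k → A₁.carrier, ∃ b₂ : Fin k → A₂.carrier,
        DWinPrefix k n A₂ A₁ (r + k) (Fin.append a₂ b₂) (Fin.append a₁ b₁)

/-- The Duplicator has a winning strategy in the (n,k)-tree-prefix game on the set
{(A₁,ā₁),(A₂,ā₂)}: in the first round the Spoiler picks a k-tuple in either structure, and
thereafter in the structure in which the Duplicator chose in the previous round. -/
def DWinTree {τ : Vocab} (k : ℕ) : ℕ → (A₁ A₂ : Struc τ) → (r : ℕ) →
    (Fin r → A₁.carrier) → (Fin r → A₂.carrier) → Prop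
  | 0, A₁, A₂, r, a₁, a₂ => PIso A₁ A₂ r a₁ a₂
  | n+1, A₁, A₂, r, a₁, a₂ =>
      (∀ b₁ : Fin k → A₁.carrier, ∃ b₂ : Fin k → A₂.carrier,
        DWinPrefix k n A₂ A₁ (r + k) (Fin.append a₂ b₂) (Fin.append a₁ b₁)) ∧
      (∀ b₂ : Fin k → A₂.carrier, ∃ b₁ : Fin k → A₁.carrier,
        DWinPrefix k n A₁ A₂ (r + k) (Fin.append a₁ b₁) (Fin.append a₂ b₂))

/-- (A₁,ā₁) ⇛_{(n,k)} (A₂,ā₂) : every tΣ_{(n,k)} formula true of (A₁,ā₁) is true of (A₂,ā₂). -/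
def TransferNK {τ : Vocab} (n k : ℕ) (A₁ A₂ : Struc τ) (r : ℕ)
    (a₁ : Fin r → A₁.carrier) (a₂ : Fin r → A₂.carrier) : Prop :=
  ∀ φ : Formula τ r, SigNK τ k n φ → Sat A₁ φ a₁ → Sat A₂ φ a₂

/-- (A₁,ā₁) ≡_{(n,k)} (A₂,ā₂) : agreement on all tΣ_{(n,k)} formulae. -/
def EquivNK {τ : Vocab} (n k : ℕ) (A₁ A₂ : Struc τ) (r : ℕ)
    (a₁ : Fin r → A₁.carrier) (a₂ : Fin r → A₂.carrier) : Prop :=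
  ∀ φ : Formula τ r, SigNK τ k n φ → (Sat A₁ φ a₁ ↔ Sat A₂ φ a₂)

namespace QFInterp

variable {σ τ : Vocab}

/-- The universe formula ξ_U applied at variable `i`. -/
def uAt (Ξ : QFInterp σ τ) {n : ℕ} (i : Fin n) : Formula σ n :=
  relabel (fun _ : Fin 1 => i) Ξ.xiU

/-- The universe formula ξ_U applied at the last (just-quantified) variable. -/
def uLast (Ξ : QFInterp σ τ) {n : ℕ} : Formula σ (n+1) :=
  Ξ.uAt (Fin.last n)

/-- Close a pending quantifier-block guard. -/
def closeG {n : ℕ} : Option (Bool × Formula σ n) → Formula σ n → Formula σ n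
  | none, r => r
  | some (true, g), r => g.and r
  | some (false, g), r => g.or r

/-- Block-wise translation Ξ(φ) of a formula under a quantifier-free interpretation,
with an accumulator carrying the pending universe-guard of the current quantifier block:
Ξ(R(z̄)) = ξ_R(z̄) ∧ ⋀ᵢ ξ_U(zᵢ); Ξ(¬R(z̄)) = ¬ξ_R(z̄) ∧ ⋀ᵢ ξ_U(zᵢ) (¬ξ_R in NNF);
Ξ commutes with conjunctions and disjunctions; Ξ(∃x̄ ⋀ᵢφᵢ) = ∃x̄(⋀ⱼ ξ_U(xⱼ) ∧ ⋀ᵢΞ(φᵢ));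
Ξ(∀x̄ ⋁ᵢφᵢ) = ∀x̄((⋁ⱼ ¬ξ_U(xⱼ)) ∨ ⋁ᵢΞ(φᵢ)) (¬ξ_U in NNF). -/
def trA (Ξ : QFInterp σ τ) : ∀ {n : ℕ}, Option (Bool × Formula σ n) → Formula τ n → Formula σ n
  | _, mode, .tru => closeG mode .tru
  | _, mode, .fls => closeG mode .fls
  | _, mode, .rel R ts =>
      closeG mode ((relabel ts (Ξ.xiR R)).and (finAnd (fun i => Ξ.uAt (ts i))))
  | _, mode, .nrel R ts =>
      closeG mode ((nnfNeg (relabel ts (Ξ.xiR R))).and (finAnd (fun i => Ξ.uAt (ts i))))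
  | _, mode, .eq i j => closeG mode ((Formula.eq i j).and ((Ξ.uAt i).and (Ξ.uAt j)))
  | _, mode, .neq i j => closeG mode ((Formula.neq i j).and ((Ξ.uAt i).and (Ξ.uAt j)))
  | _, some (true, g), .iAnd I f =>
      .iAnd (Option I) (fun o => o.elim g (fun i => Ξ.trA none (f i)))
  | _, some (false, g), .iOr I f =>
      .iOr (Option I) (fun o => o.elim g (fun i => Ξ.trA none (f i)))
  | _, mode, .iAnd I f => closeG mode (.iAnd I (fun i => Ξ.trA none (f i)))
  | _, mode, .iOr I f => closeG mode (.iOr I (fun i => Ξ.trA none (f i)))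
  | _, some (true, g), .ex φ =>
      .ex (Ξ.trA (some (true, (relabel Fin.castSucc g).and Ξ.uLast)) φ)
  | _, some (false, g), .all φ =>
      .all (Ξ.trA (some (false, (relabel Fin.castSucc g).or (nnfNeg Ξ.uLast))) φ)
  | _, mode, .ex φ => closeG mode (.ex (Ξ.trA (some (true, Ξ.uLast)) φ))
  | _, mode, .all φ => closeG mode (.all (Ξ.trA (some (false, nnfNeg Ξ.uLast)) φ))

/-- The translation Ξ(φ) of a formula. -/
def translate (Ξ : QFInterp σ τ) {n : ℕ} (φ : Formula τ n) : Formula σ n :=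
  Ξ.trA none φ

/-- The size |Ξ| of an interpretation: the sum of the sizes of its formulae. -/
noncomputable def size [Fintype τ.Rel] (Ξ : QFInterp σ τ) : Cardinal :=
  sizeC Ξ.xiU + ∑ R : τ.Rel, sizeC (Ξ.xiR R)

end QFInterp

universe u

section Formulas

variable {τ : Vocab}

theorem sat_nnfNeg {A : Struc τ} {n : ℕ} (φ : Formula τ n) (v : Fin n → A.carrier) :
    Sat A (nnfNeg φ) v ↔ ¬ Sat A φ v := by
  induction φ <;> simp [nnfNeg, Sat, *]

theorem rank_nnfNeg {n : ℕ} (φ : Formula τ n) : rank (nnfNeg φ) = rank φ := by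
  induction φ <;> simp [nnfNeg, rank, *]

theorem IsQF.nnfNeg {n : ℕ} {φ : Formula τ n} (h : IsQF φ) : IsQF (nnfNeg φ) := by
  induction h with
  | iAnd I hI f _ ih => exact .iOr I hI _ ih
  | iOr I hI f _ ih => exact .iAnd I hI _ ih
  | _ => constructor

theorem IsQF.rank_eq_zero {n : ℕ} {φ : Formula τ n} (h : IsQF φ) : rank φ = 0 := by
  induction h with
  | iAnd I _ f _ ih | iOr I _ f _ ih => exact le_antisymm (ciSup_le' fun i => (ih i).le) zero_le
  | _ => rfl

theorem sat_relabel {A : Struc τ} {m : ℕ} (φ : Formula τ m) {n : ℕ} (g : Fin m → Fin n)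
    (v : Fin n → A.carrier) : Sat A (relabel g φ) v ↔ Sat A φ (v ∘ g) := by
  have snoc_comp : ∀ {m n} (g : Fin m → Fin n) (v : Fin n → A.carrier) a,
      Fin.snoc v a ∘ Fin.snoc (fun i => Fin.castSucc (g i)) (Fin.last n) = Fin.snoc (v ∘ g) a := by
    intro m n g v a
    funext i
    refine Fin.lastCases ?_ (fun j => ?_) i <;> simp
  induction φ generalizing n <;> simp [relabel, Sat, *]

theorem rank_relabel {m : ℕ} (φ : Formula τ m) {n : ℕ} (g : Fin m → Fin n) :
    rank (relabel g φ) = rank φ := by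
  induction φ generalizing n <;> simp [relabel, rank, *]
theorem IsQF.relabel {m : ℕ} {φ : Formula τ m} (h : IsQF φ) {n : ℕ} (g : Fin m → Fin n) :
    IsQF (FV.relabel g φ) := by
  induction h with
  | iAnd I hI f _ ih => exact .iAnd I hI _ ih
  | iOr I hI f _ ih => exact .iOr I hI _ ih
  | _ => constructor

theorem sat_exBlock {A : Struc τ} (k : ℕ) {r : ℕ} (θ : Formula τ (r + k)) (v : Fin r → A.carrier) :
    Sat A (exBlock k θ) v ↔ ∃ w : Fin k → A.carrier, Sat A θ (Fin.append v w) := by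
  induction k with
  | zero => simp [exBlock, Fin.append_right_nil]
  | succ k ih =>
    simp only [exBlock, ih, Sat]
    constructor
    · rintro ⟨w, a, h⟩
      exact ⟨Fin.snoc w a, by rwa [Fin.append_snoc]⟩
    · rintro ⟨w, h⟩
      exact ⟨Fin.init w, w (Fin.last k), by rwa [← Fin.append_snoc, Fin.snoc_init_self]⟩

theorem rank_exBlock (k : ℕ) {r : ℕ} (θ : Formula τ (r + k)) : rank (exBlock k θ) = rank θ + k := by
  induction k with
  | zero => simp [exBlock]
  | succ k ih => simp [exBlock, ih, rank, add_assoc, add_comm (1 : Cardinal)]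

theorem TSigma.exBlock {κ : Cardinal} {lam : Ordinal} (k : ℕ) {r : ℕ} {θ : Formula τ (r + k)}
    (h : TSigma τ κ lam θ) : TSigma τ κ lam (FV.exBlock k θ) := by
  induction k with
  | zero => exact h
  | succ k ih => exact ih (.ex h)

end Formulas

section Classes

variable {τ : Vocab} {κ : Cardinal}

mutual
theorem TSigma.mono_card {κ' : Cardinal} (hle : κ ≤ κ') :
    ∀ {lam : Ordinal} {n : ℕ} {φ : Formula τ n}, TSigma τ κ lam φ → TSigma τ κ' lam φ
  | _, _, _, .qf h => .qf h
  | _, _, _, .conj I f hI lam' hlt h =>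
    .conj I f (hI.trans_le hle) lam' hlt fun i => TPi.mono_card hle (h i)
  | _, _, _, .ex h => .ex (TSigma.mono_card hle h)

theorem TPi.mono_card {κ' : Cardinal} (hle : κ ≤ κ') :
    ∀ {lam : Ordinal} {n : ℕ} {φ : Formula τ n}, TPi τ κ lam φ → TPi τ κ' lam φ
  | _, _, _, .qf h => .qf h
  | _, _, _, .disj I f hI lam' hlt h =>
    .disj I f (hI.trans_le hle) lam' hlt fun i => TSigma.mono_card hle (h i)
  | _, _, _, .all h => .all (TPi.mono_card hle h)
end

mutual
theorem TSigma.nnfNeg :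
    ∀ {lam : Ordinal} {n : ℕ} {φ : Formula τ n}, TSigma τ κ lam φ → TPi τ κ lam (nnfNeg φ)
  | _, _, _, .qf h => .qf h.nnfNeg
  | _, _, _, .conj I _ hI lam' hlt h => .disj I _ hI lam' hlt fun i => TPi.nnfNeg (h i)
  | _, _, _, .ex h => .all (TSigma.nnfNeg h)

theorem TPi.nnfNeg :
    ∀ {lam : Ordinal} {n : ℕ} {φ : Formula τ n}, TPi τ κ lam φ → TSigma τ κ lam (nnfNeg φ)
  | _, _, _, .qf h => .qf h.nnfNeg
  | _, _, _, .disj I _ hI lam' hlt h => .conj I _ hI lam' hlt fun i => TSigma.nnfNeg (h i)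
  | _, _, _, .all h => .ex (TPi.nnfNeg h)
end

mutual
theorem TSigma.relabel : ∀ {lam : Ordinal} {n m : ℕ} {φ : Formula τ n} (g : Fin n → Fin m),
    TSigma τ κ lam φ → TSigma τ κ lam (relabel g φ)
  | _, _, _, _, g, .qf h => .qf (h.relabel g)
  | _, _, _, _, g, .conj I _ hI lam' hlt h => .conj I _ hI lam' hlt fun i => TPi.relabel g (h i)
  | _, _, _, _, _, .ex h => .ex (TSigma.relabel _ h)

theorem TPi.relabel : ∀ {lam : Ordinal} {n m : ℕ} {φ : Formula τ n} (g : Fin n → Fin m),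
    TPi τ κ lam φ → TPi τ κ lam (relabel g φ)
  | _, _, _, _, g, .qf h => .qf (h.relabel g)
  | _, _, _, _, g, .disj I _ hI lam' hlt h => .disj I _ hI lam' hlt fun i => TSigma.relabel g (h i)
  | _, _, _, _, _, .all h => .all (TPi.relabel _ h)
end

theorem TSigmaInf.nnfNeg {lam : Ordinal} {n : ℕ} {φ : Formula τ n} (h : TSigmaInf τ lam φ) :
    TPiInf τ lam (nnfNeg φ) :=
  let ⟨κ, hκ, h⟩ := h; ⟨κ, hκ, h.nnfNeg⟩

theorem TPiInf.nnfNeg {lam : Ordinal} {n : ℕ} {φ : Formula τ n} (h : TPiInf τ lam φ) :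
    TSigmaInf τ lam (nnfNeg φ) :=
  let ⟨κ, hκ, h⟩ := h; ⟨κ, hκ, h.nnfNeg⟩

theorem TSigmaInf.exBlock {lam : Ordinal} (k : ℕ) {r : ℕ} {θ : Formula τ (r + k)}
    (h : TSigmaInf τ lam θ) : TSigmaInf τ lam (FV.exBlock k θ) :=
  let ⟨κ, hκ, h⟩ := h; ⟨κ, hκ, h.exBlock k⟩

theorem TSigmaInf.iAnd {lam : Ordinal} {n : ℕ} {I : Type} {f : I → Formula τ n}
    (lam' : I → Ordinal) (hlt : ∀ i, lam' i < lam) (h : ∀ i, TPiInf τ (lam' i) (f i)) :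
    TSigmaInf τ lam (.iAnd I f) := by
  choose κ hκ hf using h
  refine ⟨max ℵ₀ (max (Order.succ #I) (⨆ i, κ i)), le_max_left _ _,
    .conj I f ?_ lam' hlt fun i => (hf i).mono_card ?_⟩
  · exact (Order.lt_succ _).trans_le ((le_max_left _ _).trans (le_max_right _ _))
  · exact (le_ciSup Cardinal.bddAbove_of_small i).trans
      ((le_max_right _ _).trans (le_max_right _ _))

theorem Ordinal.exists_lift_bound {I : Type} {l : I → Ordinal.{0}} {lam' : I → Ordinal.{u}}
    {lam : Ordinal.{u}} (hl : ∀ i, Ordinal.lift.{u} (l i) ≤ lam' i) (hlt : ∀ i, lam' i < lam) :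
    ∃ L : Ordinal.{0}, Ordinal.lift.{u} L ≤ lam ∧ ∀ i, l i < L := by
  refine ⟨⨆ i, Order.succ (l i), not_lt.1 fun hL => ?_,
    fun i => (Order.lt_succ _).trans_le (Ordinal.le_iSup _ i)⟩
  obtain ⟨L', hL', rfl⟩ := Ordinal.lt_lift_iff.1 hL
  obtain ⟨i, hi⟩ := Ordinal.lt_iSup_iff.1 hL'
  exact (((Ordinal.lift_le.2 (Order.lt_succ_iff.1 hi)).trans (hl i)).trans_lt (hlt i)).false

-- Levels can be taken in `Ordinal.{0}`; this is what bounds the number of inequivalent formulas.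
mutual
theorem TSigma.exists_lift_level : ∀ {lam : Ordinal.{u}} {n : ℕ} {φ : Formula τ n},
    TSigma τ κ lam φ → ∃ l : Ordinal.{0}, Ordinal.lift.{u} l ≤ lam ∧ TSigma τ κ (Ordinal.lift l) φ
  | _, _, _, .qf h => ⟨0, by simp, by simpa using TSigma.qf h⟩
  | _, _, _, .conj I f hI _ hlt h => by
    choose l hl hf using fun i => TPi.exists_lift_level (h i)
    obtain ⟨L, hL, hlL⟩ := Ordinal.exists_lift_bound hl hlt
    exact ⟨L, hL, .conj I f hI _ (fun i => Ordinal.lift_lt.2 (hlL i)) hf⟩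
  | _, _, _, .ex h =>
    let ⟨l, hl, h⟩ := TSigma.exists_lift_level h; ⟨l, hl, .ex h⟩

theorem TPi.exists_lift_level : ∀ {lam : Ordinal.{u}} {n : ℕ} {φ : Formula τ n},
    TPi τ κ lam φ → ∃ l : Ordinal.{0}, Ordinal.lift.{u} l ≤ lam ∧ TPi τ κ (Ordinal.lift l) φ
  | _, _, _, .qf h => ⟨0, by simp, by simpa using TPi.qf h⟩
  | _, _, _, .disj I f hI _ hlt h => by
    choose l hl hf using fun i => TSigma.exists_lift_level (h i)
    obtain ⟨L, hL, hlL⟩ := Ordinal.exists_lift_bound hl hlt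
    exact ⟨L, hL, .disj I f hI _ (fun i => Ordinal.lift_lt.2 (hlL i)) hf⟩
  | _, _, _, .all h =>
    let ⟨l, hl, h⟩ := TPi.exists_lift_level h; ⟨l, hl, .all h⟩
end

inductive SigmaMatrix (τ : Vocab) (κ : Cardinal) (lam : Ordinal) : ∀ {n : ℕ}, Formula τ n → Prop
  | qf {n : ℕ} {θ : Formula τ n} : IsQF θ → SigmaMatrix τ κ lam θ
  | conj {n : ℕ} (I : Type) (f : I → Formula τ n) (hI : #I < κ) (lam' : I → Ordinal)
      (hlt : ∀ i, lam' i < lam) (h : ∀ i, TPi τ κ (lam' i) (f i)) : SigmaMatrix τ κ lam (.iAnd I f)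

theorem SigmaMatrix.relabel {lam : Ordinal} {n m : ℕ} {θ : Formula τ n} (g : Fin n → Fin m) :
    SigmaMatrix τ κ lam θ → SigmaMatrix τ κ lam (FV.relabel g θ)
  | .qf h => .qf (h.relabel g)
  | .conj I _ hI lam' hlt h => .conj I _ hI lam' hlt fun i => (h i).relabel g

theorem TSigma.exists_normalForm {lam : Ordinal} : ∀ {n : ℕ} {ψ : Formula τ n}, TSigma τ κ lam ψ →
    ∃ (k : ℕ) (θ : Formula τ (n + k)),
      (∀ (A : Struc τ) (v : Fin n → A.carrier),
        Sat A ψ v ↔ ∃ w : Fin k → A.carrier, Sat A θ (Fin.append v w)) ∧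
      rank θ + k ≤ rank ψ ∧ SigmaMatrix τ κ lam θ
  | _, _, .qf h => ⟨0, _, fun A v => by simp [Fin.append_right_nil], by simp, .qf h⟩
  | _, _, .conj I f hI lam' hlt h =>
    ⟨0, _, fun A v => by simp [Fin.append_right_nil], by simp, .conj I f hI lam' hlt h⟩
  | n, _, .ex h => by
    obtain ⟨k, θ, hsat, hrank, hθ⟩ := TSigma.exists_normalForm h
    refine ⟨k + 1, FV.relabel (Fin.cast (Nat.succ_add_eq_add_succ n k)) θ, fun A v => ?_, ?_,
      hθ.relabel _⟩
    · simp only [Sat, hsat, sat_relabel]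
      constructor
      · rintro ⟨a, w, hw⟩
        exact ⟨Fin.cons a w, by rwa [← Fin.append_left_snoc]⟩
      · rintro ⟨w, hw⟩
        exact ⟨w 0, Fin.tail w, by rwa [Fin.append_left_snoc, Fin.cons_self_tail]⟩
    · simp only [rank_relabel, rank]
      push_cast
      rw [← add_assoc]
      gcongr

end Classes

section AtomicTypes

variable {τ : Vocab} {r : ℕ}

def Atom (τ : Vocab) (r : ℕ) : Type :=
  (Σ R : τ.Rel, Fin (τ.arity R) → Fin r) ⊕ (Fin r × Fin r)

instance [Finite τ.Rel] : Finite (Atom τ r) := by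
  unfold Atom
  infer_instance

def Atom.formula : Atom τ r → Formula τ r
  | .inl ⟨R, ts⟩ => .rel R ts
  | .inr (i, j) => .eq i j

def atomicType (A : Struc τ) (v : Fin r → A.carrier) : Set (Atom τ r) :=
  {a | Sat A a.formula v}

theorem sat_iff_of_atomicType_eq {A B : Struc τ} {v : Fin r → A.carrier} {w : Fin r → B.carrier}
    (h : atomicType A v = atomicType B w) {φ : Formula τ r} (hφ : IsQF φ) :
    Sat A φ v ↔ Sat B φ w := by
  induction hφ with
  | rel R ts => exact Set.ext_iff.1 h (.inl ⟨R, ts⟩)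
  | nrel R ts => exact not_congr (Set.ext_iff.1 h (.inl ⟨R, ts⟩))
  | eq i j => exact Set.ext_iff.1 h (.inr (i, j))
  | neq i j => exact not_congr (Set.ext_iff.1 h (.inr (i, j)))
  | iAnd I _ f _ ih => exact forall_congr' ih
  | iOr I _ f _ ih => exact exists_congr ih
  | tru | fls => exact Iff.rfl

open Classical in
noncomputable def diagram (s : Set (Atom τ r)) : Formula τ r :=
  .iAnd (Atom τ r) fun a => if a ∈ s then a.formula else nnfNeg a.formula

theorem isQF_diagram [Finite τ.Rel] (s : Set (Atom τ r)) : IsQF (diagram s) := by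
  refine .iAnd _ inferInstance _ fun a => ?_
  have : IsQF a.formula := by rcases a with ⟨R, ts⟩ | ⟨i, j⟩ <;> constructor
  split
  · exact this
  · exact this.nnfNeg

theorem sat_diagram {A : Struc τ} {v : Fin r → A.carrier} {s : Set (Atom τ r)} :
    Sat A (diagram s) v ↔ atomicType A v = s := by
  simp only [diagram, Sat, Set.ext_iff]
  refine forall_congr' fun a => ?_
  split <;> simp [sat_nnfNeg, atomicType, *]

theorem QFInterp.atomicType_app_eq {σ : Vocab} (Ξ : QFInterp σ τ) {M N : Struc σ}
    {v : Fin r → (Ξ.app M).carrier} {v' : Fin r → (Ξ.app N).carrier}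
    (h : atomicType M (Subtype.val ∘ v) = atomicType N (Subtype.val ∘ v')) :
    atomicType (Ξ.app M) v = atomicType (Ξ.app N) v' := by
  ext (⟨R, ts⟩ | ⟨i, j⟩)
  · exact (sat_relabel _ ts _).symm.trans
      ((sat_iff_of_atomicType_eq h ((Ξ.hR R).relabel ts)).trans (sat_relabel _ ts _))
  · exact Subtype.ext_iff.trans ((Set.ext_iff.1 h (.inr (i, j))).trans Subtype.ext_iff.symm)

end AtomicTypes

section DisjointUnion

variable {τ : Vocab}

theorem Sum.map_comp_eq_inl_comp {ι α β γ δ : Type*} {f : α → γ} {g : β → δ} {u : ι → α ⊕ β}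
    {w : ι → γ} : Sum.map f g ∘ u = Sum.inl ∘ w ↔ ∃ j : ι → α, u = Sum.inl ∘ j ∧ f ∘ j = w := by
  refine ⟨fun h => ?_, by rintro ⟨j, rfl, rfl⟩; rfl⟩
  have : ∀ i, ∃ x, u i = .inl x ∧ f x = w i := fun i => by
    have := congrFun h i
    cases hu : u i <;> simp_all
  choose j hj using this
  exact ⟨j, funext fun i => (hj i).1, funext fun i => (hj i).2⟩

theorem Sum.map_comp_eq_inr_comp {ι α β γ δ : Type*} {f : α → γ} {g : β → δ} {u : ι → α ⊕ β}
    {w : ι → δ} : Sum.map f g ∘ u = Sum.inr ∘ w ↔ ∃ j : ι → β, u = Sum.inr ∘ j ∧ g ∘ j = w := by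
  refine ⟨fun h => ?_, by rintro ⟨j, rfl, rfl⟩; rfl⟩
  have : ∀ i, ∃ x, u i = .inr x ∧ g x = w i := fun i => by
    have := congrFun h i
    cases hu : u i <;> simp_all
  choose j hj using this
  exact ⟨j, funext fun i => (hj i).1, funext fun i => (hj i).2⟩

theorem adu_rel_some {A₁ A₂ : Struc τ} (S : τ.Rel) {r₁ r₂ : ℕ} (a₁ : Fin r₁ → A₁.carrier)
    (a₂ : Fin r₂ → A₂.carrier) (u : Fin (τ.arity S) → Fin r₁ ⊕ Fin r₂) :
    (adu A₁ A₂).rel (some S) (Sum.map a₁ a₂ ∘ u) ↔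
      (∃ j, u = Sum.inl ∘ j ∧ A₁.rel S (a₁ ∘ j)) ∨ (∃ j, u = Sum.inr ∘ j ∧ A₂.rel S (a₂ ∘ j)) := by
  change (∃ w, A₁.rel S w ∧ Sum.map a₁ a₂ ∘ u = Sum.inl ∘ w) ∨
    (∃ w, A₂.rel S w ∧ Sum.map a₁ a₂ ∘ u = Sum.inr ∘ w) ↔ _
  simp only [Sum.map_comp_eq_inl_comp, Sum.map_comp_eq_inr_comp]
  aesop

-- An assignment into `A₁ ⊍ A₂` is written `Sum.map a₁ a₂ ∘ ρ`: `ρ` sends each variable to its side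
-- and to its position in the tuple `a₁` or `a₂` of that side.
theorem atomicType_adu_eq {A₁ A₂ B₁ B₂ : Struc τ} {r₁ r₂ : ℕ} {a₁ : Fin r₁ → A₁.carrier}
    {a₂ : Fin r₂ → A₂.carrier} {b₁ : Fin r₁ → B₁.carrier} {b₂ : Fin r₂ → B₂.carrier}
    (h₁ : atomicType A₁ a₁ = atomicType B₁ b₁) (h₂ : atomicType A₂ a₂ = atomicType B₂ b₂)
    {n : ℕ} (ρ : Fin n → Fin r₁ ⊕ Fin r₂) :
    atomicType (adu A₁ A₂) (Sum.map a₁ a₂ ∘ ρ) = atomicType (adu B₁ B₂) (Sum.map b₁ b₂ ∘ ρ) := by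
  ext (⟨R | S, ts⟩ | ⟨i, j⟩)
  · change (Sum.map a₁ a₂ (ρ (ts ⟨0, Nat.one_pos⟩))).isLeft = true ↔
      (Sum.map b₁ b₂ (ρ (ts ⟨0, Nat.one_pos⟩))).isLeft = true
    simp
  · refine (adu_rel_some S a₁ a₂ (ρ ∘ ts)).trans (Iff.trans ?_ (adu_rel_some S b₁ b₂ (ρ ∘ ts)).symm)
    exact or_congr (exists_congr fun j => and_congr_right fun _ => Set.ext_iff.1 h₁ (.inl ⟨S, j⟩))
      (exists_congr fun j => and_congr_right fun _ => Set.ext_iff.1 h₂ (.inl ⟨S, j⟩))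
  · change Sum.map a₁ a₂ (ρ i) = Sum.map a₁ a₂ (ρ j) ↔ Sum.map b₁ b₂ (ρ i) = Sum.map b₁ b₂ (ρ j)
    rcases ρ i with x | x <;> rcases ρ j with y | y <;> simp
    · exact Set.ext_iff.1 h₁ (.inr (x, y))
    · exact Set.ext_iff.1 h₂ (.inr (x, y))

theorem sat_adu_iff_of_atomicType_eq {A₁ A₂ B₁ B₂ : Struc τ} {r₁ r₂ : ℕ}
    {a₁ : Fin r₁ → A₁.carrier} {a₂ : Fin r₂ → A₂.carrier} {b₁ : Fin r₁ → B₁.carrier}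
    {b₂ : Fin r₂ → B₂.carrier} (h₁ : atomicType A₁ a₁ = atomicType B₁ b₁)
    (h₂ : atomicType A₂ a₂ = atomicType B₂ b₂) {n : ℕ} {ψ : Formula (annotV τ) n} (hψ : IsQF ψ)
    (ρ : Fin n → Fin r₁ ⊕ Fin r₂) :
    Sat (adu A₁ A₂) ψ (fun i => Sum.map a₁ a₂ (ρ i)) ↔
      Sat (adu B₁ B₂) ψ (fun i => Sum.map b₁ b₂ (ρ i)) :=
  sat_iff_of_atomicType_eq (atomicType_adu_eq h₁ h₂ ρ) hψ

theorem exists_eq_sumMap_comp {α β : Type*} {k : ℕ} (w : Fin k → α ⊕ β) :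
    ∃ (k₁ k₂ : ℕ) (e : Fin k → Fin k₁ ⊕ Fin k₂) (w₁ : Fin k₁ → α) (w₂ : Fin k₂ → β),
      k₁ ≤ k ∧ k₂ ≤ k ∧ w = Sum.map w₁ w₂ ∘ e := by
  induction k with
  | zero => exact ⟨0, 0, finZeroElim, finZeroElim, finZeroElim, le_rfl, le_rfl, funext finZeroElim⟩
  | succ k ih =>
    obtain ⟨k₁, k₂, e, w₁, w₂, hk₁, hk₂, he⟩ := ih (Fin.tail w)
    rw [← Fin.cons_self_tail w, he]
    rcases w 0 with x | y
    · refine ⟨k₁ + 1, k₂, Fin.cons (.inl 0) (Sum.map Fin.succ id ∘ e), Fin.cons x w₁, w₂,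
        by omega, by omega, funext fun i => Fin.cases rfl (fun j => ?_) i⟩
      simp only [Fin.cons_succ, Function.comp_apply]
      rcases e j <;> rfl
    · refine ⟨k₁, k₂ + 1, Fin.cons (.inr 0) (Sum.map id Fin.succ ∘ e), w₁, Fin.cons y w₂,
        by omega, by omega, funext fun i => Fin.cases rfl (fun j => ?_) i⟩
      simp only [Fin.cons_succ, Function.comp_apply]
      rcases e j <;> rfl

def extendSides {n k r₁ r₂ k₁ k₂ : ℕ} (ρ : Fin n → Fin r₁ ⊕ Fin r₂) (e : Fin k → Fin k₁ ⊕ Fin k₂) :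
    Fin (n + k) → Fin (r₁ + k₁) ⊕ Fin (r₂ + k₂) :=
  Fin.append (Sum.map (Fin.castAdd k₁) (Fin.castAdd k₂) ∘ ρ)
    (Sum.map (Fin.natAdd r₁) (Fin.natAdd r₂) ∘ e)

theorem sumMap_extendSides_castAdd {α β : Type*} {n k r₁ r₂ k₁ k₂ : ℕ} (a₁ : Fin r₁ → α)
    (a₂ : Fin r₂ → β) (w₁ : Fin k₁ → α) (w₂ : Fin k₂ → β) (ρ : Fin n → Fin r₁ ⊕ Fin r₂)
    (e : Fin k → Fin k₁ ⊕ Fin k₂) (i : Fin n) :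
    Sum.map (Fin.append a₁ w₁) (Fin.append a₂ w₂) (extendSides ρ e (Fin.castAdd k i)) =
      Sum.map a₁ a₂ (ρ i) := by
  simp only [extendSides, Fin.append_left, Function.comp_apply]
  rcases ρ i <;> simp

theorem sumMap_extendSides_natAdd {α β : Type*} {n k r₁ r₂ k₁ k₂ : ℕ} (a₁ : Fin r₁ → α)
    (a₂ : Fin r₂ → β) (w₁ : Fin k₁ → α) (w₂ : Fin k₂ → β) (ρ : Fin n → Fin r₁ ⊕ Fin r₂)
    (e : Fin k → Fin k₁ ⊕ Fin k₂) (j : Fin k) :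
    Sum.map (Fin.append a₁ w₁) (Fin.append a₂ w₂) (extendSides ρ e (Fin.natAdd n j)) =
      Sum.map w₁ w₂ (e j) := by
  simp only [extendSides, Fin.append_right, Function.comp_apply]
  rcases e j <;> simp

theorem Fin.comp_append {α β : Type*} {n k : ℕ} (g : α → β) (u : Fin n → α) (w : Fin k → α) :
    g ∘ Fin.append u w = Fin.append (g ∘ u) (g ∘ w) := by
  funext i
  refine Fin.addCases (fun i => ?_) (fun j => ?_) i <;> simp

end DisjointUnion

section Transfer

variable {τ : Vocab} {μ : Cardinal}

theorem Cardinal.ciSup_add_le {ι : Type} {f : ι → Cardinal} {c : Cardinal} (hc : c ≤ μ)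
    (hf : ∀ i, f i + c ≤ μ) : (⨆ i, f i) + c ≤ μ := by
  rcases isEmpty_or_nonempty ι with hι | hι
  · simpa [ciSup_of_empty] using hc
  · rw [Cardinal.ciSup_add _ Cardinal.bddAbove_of_small]
    exact ciSup_le' hf

def Transfers (μ : Cardinal) (lam : Ordinal) (c : Cardinal) (A B : Struc τ) {r : ℕ}
    (a : Fin r → A.carrier) (b : Fin r → B.carrier) : Prop :=
  ∀ χ : Formula τ r, TSigmaInf τ lam χ → rank χ + c ≤ μ → Sat A χ a → Sat B χ b

def Matches (μ : Cardinal) (lam : Ordinal) (c : Cardinal) (A B : Struc τ) {r : ℕ}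
    (a : Fin r → A.carrier) (b : Fin r → B.carrier) : Prop :=
  atomicType A a = atomicType B b ∧ ∀ l < lam, Transfers μ l c B A b a

theorem Matches.mono {lam : Ordinal} {c c' : Cardinal} {A B : Struc τ} {r : ℕ}
    {a : Fin r → A.carrier} {b : Fin r → B.carrier} (h : Matches μ lam c A B a b) (hc : c ≤ c') :
    Matches μ lam c' A B a b :=
  ⟨h.1, fun l hl χ hχ hr => h.2 l hl χ hχ (le_trans (by gcongr) hr)⟩

theorem Transfers.exists_matches [Finite τ.Rel] {lam : Ordinal} {c : Cardinal} {A B : Struc τ}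
    {r : ℕ} {a : Fin r → A.carrier} {b : Fin r → B.carrier} (h : Transfers μ lam c A B a b)
    {k : ℕ} (hk : k + c ≤ μ) (w : Fin k → A.carrier) :
    ∃ w' : Fin k → B.carrier, Matches μ lam (c + k) A B (Fin.append a w) (Fin.append b w') := by
  rcases eq_or_ne lam 0 with rfl | hlam
  · have hdiag : TSigmaInf τ 0 (exBlock k (diagram (atomicType A (Fin.append a w)))) :=
      ⟨ℵ₀, le_rfl, (TSigma.qf (isQF_diagram _)).exBlock k⟩
    obtain ⟨w', hw'⟩ := (sat_exBlock ..).1 <| h _ hdiag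
      (by rwa [rank_exBlock, (isQF_diagram _).rank_eq_zero, zero_add])
      ((sat_exBlock ..).2 ⟨w, sat_diagram.2 rfl⟩)
    exact ⟨w', (sat_diagram.1 hw').symm, fun l hl => absurd hl not_lt_zero⟩
  by_contra! hno
  -- Otherwise each candidate answer `w'` is refuted by a tΠ formula `ξ w'` of lower level, and
  -- `∃ x̄ ⋀_{w'} ξ w'` is a tΣ formula of level `lam` that holds of `a` but not of `b`.
  have hsep : ∀ w' : Fin k → B.carrier, ∃ (l : Ordinal) (ξ : Formula τ (r + k)), l < lam ∧
      TPiInf τ l ξ ∧ rank ξ + (c + k) ≤ μ ∧ Sat A ξ (Fin.append a w) ∧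
      ¬ Sat B ξ (Fin.append b w') := by
    intro w'
    by_cases htype : atomicType A (Fin.append a w) = atomicType B (Fin.append b w')
    · obtain ⟨l, hl, χ, hχ, hr, hB, hA⟩ := by simpa [Matches, Transfers, htype] using hno w'
      exact ⟨l, nnfNeg χ, hl, hχ.nnfNeg, by rwa [rank_nnfNeg], (sat_nnfNeg ..).2 hA,
        fun h => (sat_nnfNeg ..).1 h hB⟩
    · refine ⟨0, diagram (atomicType A (Fin.append a w)), pos_iff_ne_zero.2 hlam,
        ⟨ℵ₀, le_rfl, .qf (isQF_diagram _)⟩, ?_, sat_diagram.2 rfl,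
        fun h => htype (sat_diagram.1 h).symm⟩
      rwa [(isQF_diagram _).rank_eq_zero, zero_add, add_comm]
  choose L ξ hL hξ hr hA hB using hsep
  have hθ : TSigmaInf τ lam (exBlock k (.iAnd _ ξ)) := (TSigmaInf.iAnd L hL hξ).exBlock k
  have hrank : rank (exBlock k (.iAnd _ ξ)) + c ≤ μ := by
    rw [rank_exBlock, rank, add_assoc]
    exact Cardinal.ciSup_add_le hk fun w' => by simpa [add_comm] using hr w'
  obtain ⟨w', hw'⟩ := (sat_exBlock ..).1 (h _ hθ hrank ((sat_exBlock ..).2 ⟨w, hA⟩))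
  exact hB w' (hw' w')

end Transfer

section Composition

variable {τ : Vocab} (Ξ : QFInterp (annotV τ) τ) {μ : Cardinal}

theorem exists_matching_witnesses [Finite τ.Rel] {lam : Ordinal} {c : Cardinal}
    {A₁ A₂ B₁ B₂ : Struc τ} {n r₁ r₂ k : ℕ} {ρ : Fin n → Fin r₁ ⊕ Fin r₂}
    {a₁ : Fin r₁ → A₁.carrier} {a₂ : Fin r₂ → A₂.carrier}
    {b₁ : Fin r₁ → B₁.carrier} {b₂ : Fin r₂ → B₂.carrier}
    {v : Fin n → (Ξ.app (adu A₁ A₂)).carrier} {v' : Fin n → (Ξ.app (adu B₁ B₂)).carrier}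
    (hv : Subtype.val ∘ v = Sum.map a₁ a₂ ∘ ρ) (hv' : Subtype.val ∘ v' = Sum.map b₁ b₂ ∘ ρ)
    (h₁ : Transfers μ lam c A₁ B₁ a₁ b₁) (h₂ : Transfers μ lam c A₂ B₂ a₂ b₂) (hk : k + c ≤ μ)
    (w : Fin k → (Ξ.app (adu A₁ A₂)).carrier) :
    ∃ (s₁ s₂ : ℕ) (ρ' : Fin (n + k) → Fin s₁ ⊕ Fin s₂) (a₁' : Fin s₁ → A₁.carrier)
      (a₂' : Fin s₂ → A₂.carrier) (b₁' : Fin s₁ → B₁.carrier) (b₂' : Fin s₂ → B₂.carrier)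
      (w' : Fin k → (Ξ.app (adu B₁ B₂)).carrier),
      Subtype.val ∘ Fin.append v w = Sum.map a₁' a₂' ∘ ρ' ∧
      Subtype.val ∘ Fin.append v' w' = Sum.map b₁' b₂' ∘ ρ' ∧
      Matches μ lam (c + k) A₁ B₁ a₁' b₁' ∧ Matches μ lam (c + k) A₂ B₂ a₂' b₂' := by
  obtain ⟨k₁, k₂, e, w₁, w₂, hk₁, hk₂, hw⟩ := exists_eq_sumMap_comp (Subtype.val ∘ w)
  have budget : ∀ {j : ℕ}, j ≤ k → (j : Cardinal) + c ≤ μ := fun hj =>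
    le_trans (by gcongr) hk
  obtain ⟨w₁', hm₁⟩ := h₁.exists_matches (budget hk₁) w₁
  obtain ⟨w₂', hm₂⟩ := h₂.exists_matches (budget hk₂) w₂
  have hA : Subtype.val ∘ Fin.append v w =
      Sum.map (Fin.append a₁ w₁) (Fin.append a₂ w₂) ∘ extendSides ρ e := by
    refine (Fin.comp_append _ v w).trans
      (funext fun i => Fin.addCases (fun i => ?_) (fun j => ?_) i)
    · exact (Fin.append_left _ _ i).trans
        ((congrFun hv i).trans (sumMap_extendSides_castAdd _ _ _ _ ρ e i).symm)
    · exact (Fin.append_right _ _ j).trans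
        ((congrFun hw j).trans (sumMap_extendSides_natAdd _ _ _ _ ρ e j).symm)
  -- the answers lie in the universe of `Ξ` because `ξ_U` is quantifier-free
  have hU : ∀ j, Sat (adu B₁ B₂) Ξ.xiU (fun _ => Sum.map w₁' w₂' (e j)) := fun j => by
    have hAj : Sat (adu A₁ A₂) Ξ.xiU (fun _ => Sum.map w₁ w₂ (e j)) := by
      have hwj : (w j).1 = Sum.map w₁ w₂ (e j) := congrFun hw j
      exact hwj ▸ (w j).2
    simpa only [sumMap_extendSides_natAdd] using
      (sat_adu_iff_of_atomicType_eq hm₁.1 hm₂.1 Ξ.hU fun _ => extendSides ρ e (Fin.natAdd n j)).1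
        (by simpa only [sumMap_extendSides_natAdd] using hAj)
  refine ⟨_, _, _, _, _, _, _, fun j => ⟨_, hU j⟩, hA, ?_,
    hm₁.mono (by gcongr), hm₂.mono (by gcongr)⟩
  refine (Fin.comp_append _ v' _).trans (funext fun i => Fin.addCases (fun i => ?_) (fun j => ?_) i)
  · exact (Fin.append_left _ _ i).trans
      ((congrFun hv' i).trans (sumMap_extendSides_castAdd _ _ _ _ ρ e i).symm)
  · exact (Fin.append_right _ _ j).trans (sumMap_extendSides_natAdd _ _ _ _ ρ e j).symm

theorem TSigma.transfer_app_adu [Finite τ.Rel] (lam : Ordinal) :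
    ∀ {κ : Cardinal} {n : ℕ} {ψ : Formula τ n}, TSigma τ κ lam ψ →
    ∀ {c : Cardinal}, rank ψ + c ≤ μ →
    ∀ {A₁ A₂ B₁ B₂ : Struc τ} {r₁ r₂ : ℕ} {ρ : Fin n → Fin r₁ ⊕ Fin r₂}
      {a₁ : Fin r₁ → A₁.carrier} {a₂ : Fin r₂ → A₂.carrier}
      {b₁ : Fin r₁ → B₁.carrier} {b₂ : Fin r₂ → B₂.carrier}
      {v : Fin n → (Ξ.app (adu A₁ A₂)).carrier} {v' : Fin n → (Ξ.app (adu B₁ B₂)).carrier},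
      Subtype.val ∘ v = Sum.map a₁ a₂ ∘ ρ → Subtype.val ∘ v' = Sum.map b₁ b₂ ∘ ρ →
      Transfers μ lam c A₁ B₁ a₁ b₁ → Transfers μ lam c A₂ B₂ a₂ b₂ →
      Sat (Ξ.app (adu A₁ A₂)) ψ v → Sat (Ξ.app (adu B₁ B₂)) ψ v' := by
  induction lam using WellFoundedLT.induction with | _ lam IH =>
  intro κ n ψ hψ c hrk A₁ A₂ B₁ B₂ r₁ r₂ ρ a₁ a₂ b₁ b₂ v v' hv hv' h₁ h₂ hA
  obtain ⟨k, θ, hψθ, hθk, hθ⟩ := hψ.exists_normalForm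
  have hθμ : rank θ + (c + k) ≤ μ :=
    calc rank θ + (c + k) = rank θ + k + c := by ring
      _ ≤ rank ψ + c := by gcongr
      _ ≤ μ := hrk
  obtain ⟨w, hw⟩ := (hψθ _ _).1 hA
  obtain ⟨s₁, s₂, ρ', a₁', a₂', b₁', b₂', w', hA', hB', hm₁, hm₂⟩ :=
    exists_matching_witnesses Ξ hv hv' h₁ h₂ (le_trans (by rw [add_comm]; exact le_add_self) hθμ) w
  refine (hψθ _ _).2 ⟨w', ?_⟩
  cases hθ with
  | qf hqf =>
    refine (sat_iff_of_atomicType_eq (Ξ.atomicType_app_eq ?_) hqf).1 hw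
    exact (congrArg (atomicType _) hA').trans
      ((atomicType_adu_eq hm₁.1 hm₂.1 ρ').trans (congrArg (atomicType _) hB').symm)
  | conj I f _ lam' hlt hf =>
    -- a conjunct failing on the `B` side would, by induction on the level, fail on the `A` side
    intro i
    by_contra hfi
    have hrank : rank (FV.nnfNeg (f i)) + (c + k) ≤ μ := by
      rw [rank_nnfNeg]
      exact le_trans (by gcongr; exact le_ciSup Cardinal.bddAbove_of_small i) hθμ
    exact (sat_nnfNeg _ _).1 (IH (lam' i) (hlt i) (hf i).nnfNeg hrank hB' hA' (hm₁.2 _ (hlt i))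
      (hm₂.2 _ (hlt i)) ((sat_nnfNeg _ _).2 hfi)) (hw i)

end Composition

section Denotation

variable {τ : Vocab} {r : ℕ}

def Formula.denote (χ : Formula τ r) : (A : Struc τ) → (Fin r → A.carrier) → Prop :=
  fun A => Sat A χ

theorem TSigmaInf.exists_denote_eq_of_le {l lam : Ordinal} {χ : Formula τ r}
    (h : TSigmaInf τ l χ) (hl : l ≤ lam) :
    ∃ χ' : Formula τ r, TSigmaInf τ lam χ' ∧ rank χ' ≤ rank χ ∧ χ'.denote = χ.denote := by
  obtain ⟨κ, hκ, h⟩ := h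
  obtain ⟨k, θ, hχθ, hθk, hθ⟩ := h.exists_normalForm
  have hdenote : (FV.exBlock k θ).denote = χ.denote := by
    funext A v
    exact propext ((sat_exBlock ..).trans (hχθ A v).symm)
  cases hθ with
  | qf hqf =>
    -- a quantifier-free matrix has level `0`, so it is wrapped into a conjunction to reach `lam`
    have hwrap : TSigma τ κ lam (.iAnd PUnit fun _ => θ) := by
      rcases eq_or_ne lam 0 with rfl | hlam
      · exact .qf (.iAnd PUnit inferInstance _ fun _ => hqf)
      · exact .conj PUnit _ (by simpa using one_lt_aleph0.trans_le hκ) (fun _ => 0)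
          (fun _ => pos_iff_ne_zero.2 hlam) fun _ => .qf hqf
    refine ⟨FV.exBlock k (.iAnd PUnit fun _ => θ), ⟨κ, hκ, hwrap.exBlock k⟩, ?_, ?_⟩
    · simpa [rank_exBlock, rank] using hθk
    · rw [← hdenote]
      funext A v
      simp [Formula.denote, sat_exBlock, Sat]
  | conj I f hI lam' hlt hf =>
    exact ⟨FV.exBlock k (.iAnd I f), ⟨κ, hκ, (TSigma.conj I f hI lam'
      (fun i => (hlt i).trans_le hl) hf).exBlock k⟩, by rwa [rank_exBlock], hdenote⟩

theorem small_denote_tSigma [Finite τ.Rel] (l : Ordinal.{0}) (r : ℕ) :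
    Small.{0} (Formula.denote '' {χ : Formula τ r | TSigmaInf τ (Ordinal.lift.{u} l) χ}) := by
  induction l using WellFoundedLT.induction generalizing r with | _ l IH =>
  let lower (m : ℕ) : Set ((A : Struc τ) → (Fin m → A.carrier) → Prop) :=
    ⋃ o : Set.Iio l, Formula.denote '' {χ : Formula τ m | TSigmaInf τ (Ordinal.lift.{u} o) χ}
  have (m : ℕ) : Small.{0} (lower m) := @small_iUnion _ _ _ _ fun o => IH o.1 o.2 m
  -- a tΣ formula of level `l` says `∃ w̄ (atomic type ∈ D ∧ ⋀_{P ∈ S} ¬ P)` for a set `S` of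
  -- lower-level denotations
  let decode : (Σ k : ℕ, Set (Set (Atom τ (r + k))) × Set (lower (r + k))) →
      (A : Struc τ) → (Fin r → A.carrier) → Prop := fun x A v =>
    ∃ w : Fin x.1 → A.carrier, atomicType A (Fin.append v w) ∈ x.2.1 ∧
      ∀ P ∈ x.2.2, ¬ P.1 A (Fin.append v w)
  refine small_subset (s := Set.range decode) ?_
  rintro _ ⟨χ, ⟨κ, hκ, hχ⟩, rfl⟩
  obtain ⟨k, θ, hχθ, -, hθ⟩ := TSigma.exists_normalForm.{u, 0} hχ
  cases hθ with
  | qf hqf =>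
    refine ⟨⟨k, {t | ∃ (A : Struc τ) (u : Fin (r + k) → A.carrier), atomicType A u = t ∧ Sat A θ u},
      ∅⟩, funext fun A => funext fun v => propext ?_⟩
    simp only [decode, Formula.denote, hχθ, Set.mem_empty_iff_false, IsEmpty.forall_iff,
      implies_true, and_true]
    exact exists_congr fun w =>
      ⟨fun ⟨_, _, ht, hs⟩ => (sat_iff_of_atomicType_eq ht hqf).1 hs, fun hs => ⟨A, _, rfl, hs⟩⟩
  | conj I f _ lam' hlt hf =>
    have hlower : ∀ i, (nnfNeg (f i)).denote ∈ lower (r + k) := fun i => by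
      obtain ⟨o, ho, hfo⟩ := (hf i).exists_lift_level
      exact Set.mem_iUnion.2
        ⟨⟨o, Ordinal.lift_lt.1 (ho.trans_lt (hlt i))⟩, _, ⟨κ, hκ, hfo.nnfNeg⟩, rfl⟩
    refine ⟨⟨k, Set.univ, Set.range fun i => ⟨_, hlower i⟩⟩,
      funext fun A => funext fun v => propext ?_⟩
    simp only [decode, Set.mem_univ, true_and, Set.forall_mem_range, Formula.denote, sat_nnfNeg,
      not_not, hχθ, Sat]

end Denotation

section Decomposition

variable {τ : Vocab} {I : Type}

def PropForm.ofModels {V : Type} (S : Set (V → Bool)) : PropForm V :=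
  .iOr S fun ζ => .iAnd V fun x => if ζ.1 x then .var x else .not (.var x)

theorem PropForm.eval_ofModels {V : Type} {S : Set (V → Bool)} {ζ : V → Bool} :
    (PropForm.ofModels S).eval ζ ↔ ζ ∈ S := by
  have hpoint : ∀ η : V → Bool,
      (∀ x, (if η x then PropForm.var x else .not (.var x)).eval ζ) ↔ η = ζ := fun η => by
    rw [funext_iff]
    refine forall_congr' fun x => ?_
    cases η x <;> cases hζ : ζ x <;> simp [PropForm.eval, hζ]
  simp only [ofModels, eval, hpoint]
  exact ⟨fun ⟨η, hη⟩ => hη ▸ η.2, fun h => ⟨⟨ζ, h⟩, rfl⟩⟩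

def AgreeOn (Δ : I → Formula τ 0) (A B : Struc τ) : Prop :=
  ∀ i, Sat A (Δ i) emptyA ↔ Sat B (Δ i) emptyA

open Classical in
noncomputable def truthPattern (Δ : I → Formula τ 0) (A₁ A₂ : Struc τ) : I × Fin 2 → Bool :=
  fun p => decide (Sat (![A₁, A₂] p.2) (Δ p.1) emptyA)

open Classical in
theorem eq_truthPattern_iff {Δ : I → Formula τ 0} {A₁ A₂ : Struc τ} {ζ : I × Fin 2 → Bool} :
    ζ = truthPattern Δ A₁ A₂ ↔
      (∀ i, ζ (i, 0) = true ↔ Sat A₁ (Δ i) emptyA) ∧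
        (∀ i, ζ (i, 1) = true ↔ Sat A₂ (Δ i) emptyA) := by
  constructor
  · rintro rfl
    exact ⟨fun i => decide_eq_true_iff, fun i => decide_eq_true_iff⟩
  · rintro ⟨h₀, h₁⟩
    funext ⟨i, j⟩
    fin_cases j
    · exact Bool.eq_iff_iff.2 ((h₀ i).trans decide_eq_true_iff.symm)
    · exact Bool.eq_iff_iff.2 ((h₁ i).trans decide_eq_true_iff.symm)

theorem agreeOn_of_truthPattern_eq {Δ : I → Formula τ 0} {A₁ A₂ B₁ B₂ : Struc τ}
    (h : truthPattern Δ A₁ A₂ = truthPattern Δ B₁ B₂) : AgreeOn Δ A₁ B₁ ∧ AgreeOn Δ A₂ B₂ := by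
  obtain ⟨hA₁, hA₂⟩ := eq_truthPattern_iff.1 (rfl : truthPattern Δ A₁ A₂ = _)
  obtain ⟨hB₁, hB₂⟩ := eq_truthPattern_iff.1 h
  exact ⟨fun i => (hA₁ i).symm.trans (hB₁ i), fun i => (hA₂ i).symm.trans (hB₂ i)⟩

noncomputable def patternRedSeq (op : Struc τ → Struc τ → Struc τ) (φ : Formula τ 0)
    (Δ : I → Formula τ 0) : RedSeq τ 0 0 where
  I := I
  Δ₁ := Δ
  Δ₂ := Δ
  β := .ofModels {ζ | ∃ X₁ X₂, Sat (op X₁ X₂) φ emptyA ∧ ζ = truthPattern Δ X₁ X₂}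

theorem models_patternRedSeq_iff {op : Struc τ → Struc τ → Struc τ} {φ : Formula τ 0}
    {Δ : I → Formula τ 0} {A₁ A₂ : Struc τ} :
    (patternRedSeq op φ Δ).Models A₁ A₂ emptyA emptyA ↔
      ∃ X₁ X₂, Sat (op X₁ X₂) φ emptyA ∧ truthPattern Δ A₁ A₂ = truthPattern Δ X₁ X₂ := by
  refine ⟨fun ⟨ζ, hβ, h₀, h₁⟩ => ?_, fun h => ⟨_, PropForm.eval_ofModels.2 h,
    eq_truthPattern_iff.1 rfl⟩⟩
  obtain rfl := eq_truthPattern_iff.2 ⟨h₀, h₁⟩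
  exact PropForm.eval_ofModels.1 hβ

def Determines (op : Struc τ → Struc τ → Struc τ) (φ : Formula τ 0) (Δ : I → Formula τ 0) :
    Prop :=
  ∀ A₁ A₂ B₁ B₂, AgreeOn Δ A₁ B₁ → AgreeOn Δ A₂ B₂ →
    Sat (op A₁ A₂) φ emptyA → Sat (op B₁ B₂) φ emptyA

theorem Determines.fvDecompOp {op : Struc τ → Struc τ → Struc τ} {φ : Formula τ 0}
    {Δ : I → Formula τ 0} (h : Determines op φ Δ) : FVDecompOp op φ (patternRedSeq op φ Δ) := by
  intro A₁ A₂
  rw [models_patternRedSeq_iff]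
  refine ⟨fun hA => ⟨A₁, A₂, hA, rfl⟩, fun ⟨X₁, X₂, hX, hpat⟩ => ?_⟩
  obtain ⟨h₁, h₂⟩ := agreeOn_of_truthPattern_eq hpat.symm
  exact h X₁ X₂ A₁ A₂ h₁ h₂ hX

theorem Determines.of_nnfNeg {op : Struc τ → Struc τ → Struc τ} {φ : Formula τ 0}
    {Δ : I → Formula τ 0} (h : Determines op (nnfNeg φ) Δ) :
    Determines op φ fun i => nnfNeg (Δ i) := by
  have hagree : ∀ {A B}, AgreeOn (fun i => nnfNeg (Δ i)) A B → AgreeOn Δ B A := fun hAB i => by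
    simpa [sat_nnfNeg, not_iff_not] using (hAB i).symm
  intro A₁ A₂ B₁ B₂ h₁ h₂ hA
  by_contra hB
  exact (sat_nnfNeg _ _).1 (h B₁ B₂ A₁ A₂ (hagree h₁) (hagree h₂) ((sat_nnfNeg _ _).2 hB)) hA

theorem exists_determines_sumLike [Finite τ.Rel] (Ξ : QFInterp (annotV τ) τ) {lam : Ordinal.{u}}
    {μ : Cardinal} {φ : Formula τ 0} (hφ : TSigmaInf τ lam φ) (hr : rank φ ≤ μ) :
    ∃ (I : Type) (Δ : I → Formula τ 0), (∀ i, TSigmaInf τ lam (Δ i) ∧ rank (Δ i) ≤ μ) ∧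
      Determines (sumLike Ξ) φ Δ := by
  obtain ⟨κ, -, hφ⟩ := hφ
  obtain ⟨l₀, hl₀, hφ₀⟩ := hφ.exists_lift_level
  let F := {χ : Formula τ 0 | TSigmaInf τ (Ordinal.lift.{u} l₀) χ ∧ rank χ ≤ μ}
  have : Small.{0} (Formula.denote '' F) :=
    @small_subset _ _ _ (Set.image_mono fun _ hχ => hχ.1) (small_denote_tSigma l₀ 0)
  have hrep : ∀ P : Shrink (Formula.denote '' F), ∃ χ : Formula τ 0,
      TSigmaInf τ lam χ ∧ rank χ ≤ μ ∧ χ.denote = ((equivShrink _).symm P).1 := fun P => by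
    obtain ⟨χ, ⟨hχ, hχr⟩, hP⟩ := ((equivShrink _).symm P).2
    obtain ⟨χ', h', hr', hd⟩ := hχ.exists_denote_eq_of_le hl₀
    exact ⟨χ', h', hr'.trans hχr, hd.trans hP⟩
  choose Δ hΔ hΔr hΔd using hrep
  have htransfer : ∀ {X Y}, AgreeOn Δ X Y → Transfers μ (Ordinal.lift.{u} l₀) 0 X Y emptyA emptyA :=
    fun hXY χ hχ hχr hX => by
    have hP : (Δ (equivShrink _ ⟨_, χ, ⟨hχ, by simpa using hχr⟩, rfl⟩)).denote = χ.denote := by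
      rw [hΔd, Equiv.symm_apply_apply]
    exact (congrFun (congrFun hP _) _).mp ((hXY _).1 ((congrFun (congrFun hP _) _).mpr hX))
  refine ⟨_, Δ, fun P => ⟨hΔ P, hΔr P⟩, fun A₁ A₂ B₁ B₂ h₁ h₂ hA => ?_⟩
  exact hφ₀.transfer_app_adu Ξ _ (by simpa using hr) (ρ := finZeroElim) (Subsingleton.elim _ _)
    (Subsingleton.elim _ _) (htransfer h₁) (htransfer h₂) hA

end Decomposition

/-- For L one of tΣ_{∞,λ}[μ] or tΠ_{∞,λ}[μ] over τ and ⊛ a quantifier-free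
sum-like binary operation on τ-structures, every L sentence φ has an L reduction sequence that is
a Feferman–Vaught decomposition of φ over ⊛. -/
theorem stmt4 (τ : Vocab) [Fintype τ.Rel] (lam : Ordinal) (μ : Cardinal)
    (Ξ : QFInterp (annotV τ) τ) (φ : Formula τ 0) :
    (TSigmaInf τ lam φ → rank φ ≤ μ →
      ∃ D : RedSeq τ 0 0,
        (∀ i, TSigmaInf τ lam (D.Δ₁ i) ∧ rank (D.Δ₁ i) ≤ μ) ∧
        (∀ i, TSigmaInf τ lam (D.Δ₂ i) ∧ rank (D.Δ₂ i) ≤ μ) ∧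
        FVDecompOp (sumLike Ξ) φ D) ∧
    (TPiInf τ lam φ → rank φ ≤ μ →
      ∃ D : RedSeq τ 0 0,
        (∀ i, TPiInf τ lam (D.Δ₁ i) ∧ rank (D.Δ₁ i) ≤ μ) ∧
        (∀ i, TPiInf τ lam (D.Δ₂ i) ∧ rank (D.Δ₂ i) ≤ μ) ∧
        FVDecompOp (sumLike Ξ) φ D) := by
  refine ⟨fun hφ hr => ?_, fun hφ hr => ?_⟩
  · obtain ⟨I, Δ, hΔ, hdet⟩ := exists_determines_sumLike Ξ hφ hr
    exact ⟨patternRedSeq (sumLike Ξ) φ Δ, hΔ, hΔ, hdet.fvDecompOp⟩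
  · obtain ⟨I, Δ, hΔ, hdet⟩ :=
      exists_determines_sumLike Ξ hφ.nnfNeg ((rank_nnfNeg φ).trans_le hr)
    have hΔ' : ∀ i, TPiInf τ lam (nnfNeg (Δ i)) ∧ rank (nnfNeg (Δ i)) ≤ μ := fun i =>
      ⟨(hΔ i).1.nnfNeg, (rank_nnfNeg _).trans_le (hΔ i).2⟩
    exact ⟨patternRedSeq (sumLike Ξ) φ fun i => nnfNeg (Δ i), hΔ', hΔ', hdet.of_nnfNeg.fvDecompOp⟩

end FV
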